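/- arXiv:1206.7103 — 3 statements merged into one kernel-verified Lean document; each statement's English description precedes it below -/
import Mathlib

section
/- For all natural numbers p ≥ 1, s ≥ 1, and all x, the Fibonacci polynomial identity F_{2ps}(x) = F_s(x) · Σ_{k=0}^{p-1} (-1)^{sk} L_{(2p-2k-1)s}(x) holds. -/
/-!
Let `α, β` be the roots of `t² - x t - 1`, so that `α + β = x`, `α β = -1` and, since the
discriminant `x² + 4` is positive, `α ≠ β`. Then `(α - β) F_n = αⁿ - βⁿ` and `L_n = αⁿ + βⁿ`,
whence `F_{k+2n} = F_n L_{k+n} + (-1)ⁿ F_k`. With `n = s` and `k = 2ps` this gives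
`F_{2(p+1)s} = F_s L_{(2p+1)s} + (-1)ˢ F_{2ps}`, and the identity follows by induction on `p`.
-/

/-- Fibonacci polynomials evaluated at a real `x`. -/
def fibP : ℕ → ℝ → ℝ
  | 0, _ => 0
  | 1, _ => 1
  | n + 2, x => x * fibP (n + 1) x + fibP n x

/-- Lucas polynomials evaluated at a real `x`. -/
def lucasP : ℕ → ℝ → ℝ
  | 0, _ => 2
  | 1, x => x
  | n + 2, x => x * lucasP (n + 1) x + lucasP n x

section Binet

variable {x α β : ℝ}

theorem fibP_mul_sub_eq_pow_sub_pow (hsum : α + β = x) (hprod : α * β = -1) (n : ℕ) :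
    fibP n x * (α - β) = α ^ n - β ^ n := by
  induction n using Nat.twoStepInduction with
  | zero => simp [fibP]
  | one => simp [fibP]
  | more n ih₀ ih₁ =>
    rw [fibP, add_mul, mul_assoc, ih₁, ih₀, ← hsum]
    linear_combination (α ^ n - β ^ n) * hprod

theorem lucasP_eq_pow_add_pow (hsum : α + β = x) (hprod : α * β = -1) (n : ℕ) :
    lucasP n x = α ^ n + β ^ n := by
  induction n using Nat.twoStepInduction with
  | zero => norm_num [lucasP]
  | one => simp [lucasP, hsum]
  | more n ih₀ ih₁ =>
    rw [lucasP, ih₁, ih₀, ← hsum]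
    linear_combination (α ^ n + β ^ n) * hprod

end Binet

theorem exists_add_eq_mul_eq_neg_one_ne (x : ℝ) : ∃ α β : ℝ, α + β = x ∧ α * β = -1 ∧ α ≠ β := by
  have hdisc : 0 < x ^ 2 + 4 := by positivity
  refine ⟨(x + √(x ^ 2 + 4)) / 2, (x - √(x ^ 2 + 4)) / 2, by ring, ?_, ?_⟩
  · linear_combination (-1 / 4 : ℝ) * Real.sq_sqrt hdisc.le
  · have := Real.sqrt_pos.2 hdisc
    intro h
    linarith

theorem fibP_add_two_mul (x : ℝ) (n k : ℕ) :
    fibP (k + 2 * n) x = fibP n x * lucasP (k + n) x + (-1) ^ n * fibP k x := by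
  obtain ⟨α, β, hsum, hprod, hne⟩ := exists_add_eq_mul_eq_neg_one_ne x
  apply mul_right_cancel₀ (sub_ne_zero.2 hne)
  rw [add_mul, mul_right_comm, mul_assoc _ (fibP k x), fibP_mul_sub_eq_pow_sub_pow hsum hprod,
    fibP_mul_sub_eq_pow_sub_pow hsum hprod, fibP_mul_sub_eq_pow_sub_pow hsum hprod,
    lucasP_eq_pow_add_pow hsum hprod, ← hprod]
  ring

theorem stmt_1_general (p s : ℕ) (x : ℝ) :
    fibP (2 * p * s) x =
      fibP s x *
        ∑ k ∈ Finset.range p, (-1 : ℝ) ^ (s * k) * lucasP ((2 * p - 2 * k - 1) * s) x := by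
  induction p with
  | zero => simp [fibP]
  | succ p ih =>
    have hshift : ∀ k ∈ Finset.range p,
        (-1 : ℝ) ^ (s * (k + 1)) * lucasP ((2 * (p + 1) - 2 * (k + 1) - 1) * s) x
          = (-1) ^ s * ((-1) ^ (s * k) * lucasP ((2 * p - 2 * k - 1) * s) x) := by
      intro k hk
      have hk : k < p := Finset.mem_range.mp hk
      rw [show 2 * (p + 1) - 2 * (k + 1) - 1 = 2 * p - 2 * k - 1 by omega, mul_add, pow_add]
      ring
    rw [Finset.sum_range_succ', Finset.sum_congr rfl hshift, ← Finset.mul_sum,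
      show 2 * (p + 1) * s = 2 * p * s + 2 * s by ring, fibP_add_two_mul,
      show 2 * (p + 1) - 2 * 0 - 1 = 2 * p + 1 by omega, add_one_mul]
    linear_combination (-1 : ℝ) ^ s * ih

theorem stmt_1 (p s : ℕ) (hp : 1 ≤ p) (hs : 1 ≤ s) (x : ℝ) :
    fibP (2 * p * s) x =
      fibP s x *
        ∑ k ∈ Finset.range p, (-1 : ℝ) ^ (s * k) * lucasP ((2 * p - 2 * k - 1) * s) x :=
  stmt_1_general p s x
end

section
/- For all natural numbers s ≥ 1, q ≥ 0, and all x: (-1)^{(s+1)q} · L_s(x) · Σ_{n=0}^{q} (-1)^{(s+1)n} F_{sn}(x)² = F_{s(q+1)}(x) · F_{sq}(x). -/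
/-!
Put `ε = (-1)^(s+1)`. Multiplying the sum by `ε^q L_s` telescopes through the identity
`L_s F_{n+s} = F_{n+2s} + (-1)^s F_n`: passing from `q` to `q + 1` adds
`L_s F_{s(q+1)}^2 = F_{s(q+1)} (F_{s(q+2)} + (-1)^s F_{sq})`, whose second part cancels
`ε F_{s(q+1)} F_{sq}`.
-/

theorem fibP_add_two (n : ℕ) (x : ℝ) : fibP (n + 2) x = x * fibP (n + 1) x + fibP n x := rfl

theorem lucasP_add_two (n : ℕ) (x : ℝ) :
    lucasP (n + 2) x = x * lucasP (n + 1) x + lucasP n x := rfl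

theorem lucasP_mul_fibP (x : ℝ) (k n : ℕ) :
    lucasP k x * fibP (n + k) x = fibP (n + 2 * k) x + (-1) ^ k * fibP n x := by
  induction k using Nat.twoStepInduction generalizing n with
  | zero => simp only [lucasP, add_zero, mul_zero, pow_zero]; ring
  | one => simp only [lucasP, fibP_add_two]; ring
  | more k ih ih' =>
    have h := ih (n + 2)
    have h' := ih' (n + 1)
    rw [show n + 2 + k = n + (k + 2) by ring, show n + 2 + 2 * k = n + 2 * k + 2 by ring] at h
    rw [show n + 1 + (k + 1) = n + (k + 2) by ring,
      show n + 1 + 2 * (k + 1) = n + 2 * k + 3 by ring] at h'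
    rw [lucasP_add_two, show n + 2 * (k + 2) = n + 2 * k + 2 + 2 by ring, fibP_add_two]
    linear_combination x * h' + h + (-1) ^ k * fibP_add_two n x

theorem stmt_8_general (s q : ℕ) (x : ℝ) :
    (-1 : ℝ) ^ ((s + 1) * q) * lucasP s x *
        ∑ n ∈ Finset.range (q + 1), (-1 : ℝ) ^ ((s + 1) * n) * (fibP (s * n) x) ^ 2 =
      fibP (s * (q + 1)) x * fibP (s * q) x := by
  have hsign : (-1 : ℝ) ^ s = -(-1) ^ (s + 1) := by rw [pow_succ]; ring
  have hε : ((-1 : ℝ) ^ (s + 1)) ^ 2 = 1 := by rw [← pow_mul, pow_mul']; norm_num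
  simp only [pow_mul]
  generalize (-1 : ℝ) ^ (s + 1) = ε at hsign hε
  induction q with
  | zero => simp [fibP]
  | succ q ih =>
    have hL := lucasP_mul_fibP x s (s * q)
    rw [show s * q + s = s * (q + 1) by ring, show s * q + 2 * s = s * (q + 1 + 1) by ring,
      hsign] at hL
    have hεq : (ε ^ (q + 1)) ^ 2 = 1 := by rw [← pow_mul, mul_comm, pow_mul, hε, one_pow]
    rw [Finset.sum_range_succ]
    linear_combination ε * ih + fibP (s * (q + 1)) x * hL
      + lucasP s x * fibP (s * (q + 1)) x ^ 2 * hεq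

theorem stmt_8 (s q : ℕ) (hs : 1 ≤ s) (x : ℝ) :
    (-1 : ℝ) ^ ((s + 1) * q) * lucasP s x *
        ∑ n ∈ Finset.range (q + 1), (-1 : ℝ) ^ ((s + 1) * n) * (fibP (s * n) x) ^ 2 =
      fibP (s * (q + 1)) x * fibP (s * q) x :=
  stmt_8_general s q x
end

section
/- For all natural numbers s ≥ 1 and q ≥ 0: (x²+4)·F_{sq}(x)·F_{s(q+1)}(x) + L_{sq}(x)·L_{s(q+1)}(x) = 2·L_{s(2q+1)}(x), as an identity of polynomials in x. -/
open Polynomial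

/-- Fibonacci polynomials in `ℤ[X]`. -/
noncomputable def fibPoly : ℕ → Polynomial ℤ
  | 0 => 0
  | 1 => 1
  | n + 2 => X * fibPoly (n + 1) + fibPoly n

/-- Lucas polynomials in `ℤ[X]`. -/
noncomputable def lucasPoly : ℕ → Polynomial ℤ
  | 0 => 2
  | 1 => X
  | n + 2 => X * lucasPoly (n + 1) + lucasPoly n

/-!
The identity is the case `m = s q`, `n = s (q + 1)` of the addition formula
`2 L_{m+n} = (x² + 4) F_m F_n + L_m L_n`. For fixed `m` both sides satisfy the recurrence
`a_{n+2} = x a_{n+1} + a_n` in `n`, so it suffices to compare them at `n = 0` and `n = 1`;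
the case `n = 1` is `2 L_{m+1} = (x² + 4) F_m + x L_m`, proved the same way by induction on `m`.
-/

lemma fibPoly_add_two (n : ℕ) : fibPoly (n + 2) = X * fibPoly (n + 1) + fibPoly n := rfl

lemma lucasPoly_add_two (n : ℕ) : lucasPoly (n + 2) = X * lucasPoly (n + 1) + lucasPoly n := rfl

lemma two_mul_lucasPoly_succ :
    ∀ m, 2 * lucasPoly (m + 1) = (X ^ 2 + 4) * fibPoly m + X * lucasPoly m
  | 0 => by simp only [lucasPoly, fibPoly]; ring
  | 1 => by simp only [lucasPoly, fibPoly]; ring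
  | m + 2 => by
      linear_combination (norm := ring_nf)
        X * two_mul_lucasPoly_succ (m + 1) + two_mul_lucasPoly_succ m +
          2 * lucasPoly_add_two (m + 1) - (X ^ 2 + 4) * fibPoly_add_two m - X * lucasPoly_add_two m

lemma two_mul_lucasPoly_add (m : ℕ) :
    ∀ n, 2 * lucasPoly (m + n) = (X ^ 2 + 4) * fibPoly m * fibPoly n + lucasPoly m * lucasPoly n
  | 0 => by simp only [add_zero, fibPoly, lucasPoly]; ring
  | 1 => by simp only [fibPoly, lucasPoly]; linear_combination two_mul_lucasPoly_succ m
  | n + 2 => by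
      linear_combination (norm := ring_nf)
        X * two_mul_lucasPoly_add m (n + 1) + two_mul_lucasPoly_add m n +
          2 * lucasPoly_add_two (m + n) - (X ^ 2 + 4) * fibPoly m * fibPoly_add_two n -
          lucasPoly m * lucasPoly_add_two n

theorem stmt_13_general (s q : ℕ) :
    (X ^ 2 + 4) * fibPoly (s * q) * fibPoly (s * (q + 1)) +
        lucasPoly (s * q) * lucasPoly (s * (q + 1)) =
      2 * lucasPoly (s * (2 * q + 1)) := by
  rw [show s * (2 * q + 1) = s * q + s * (q + 1) by ring, two_mul_lucasPoly_add]

theorem stmt_13 (s q : ℕ) (hs : 1 ≤ s) :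
    (X ^ 2 + 4) * fibPoly (s * q) * fibPoly (s * (q + 1)) +
        lucasPoly (s * q) * lucasPoly (s * (q + 1)) =
      2 * lucasPoly (s * (2 * q + 1)) :=
  stmt_13_general s q
end
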